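/- arXiv:2409.03506 — 2 statements merged into one kernel-verified Lean document; each statement's English description precedes it below -/
import Mathlib

section
/- Lipschitz estimate: for any two continuous functions x₁, x₂ : [0,T] → ℝ with x₁(0)=x₂(0)=0, one has sup over ξ ∈ [0,ℓ] and t ∈ [0,T] of |P_{x₁}(ξ,t) − P_{x₂}(ξ,t)| ≤ (‖P₀'‖_∞ + (2/(a₀ℓ))‖ω_B'‖_∞) · sup_{t∈[0,T]} |x₁(t) − x₂(t)|. -/
/-!
`P₀` and `ω_B` are Lipschitz with constant the supremum of `|P₀'|`, `|ω_B'|` over one period,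
since by periodicity that is the supremum over all of `ℝ`. Replacing `x₁` by `x₂` moves the
argument of `P₀` by `x₁ t - x₂ t` and that of `ω_B` by `(x₁ s - x₂ s) - (x₁ t - x₂ t)`, hence by
at most `D` and `2 D` with `D = sup |x₁ - x₂|`. The weight of the memory term is
`e^{-a₀t} ∫₀ᵗ e^{a₀s} ds / ℓ = (1 - e^{-a₀t}) / (a₀ℓ) ≤ 1 / (a₀ℓ)`, and `e^{-a₀t} ≤ 1`.
-/

open Real Set

noncomputable def Pint (ℓ a₀ : ℝ) (ωB P₀ : ℝ → ℝ) (x : ℝ → ℝ) (ξ t : ℝ) : ℝ :=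
  Real.exp (-a₀ * t) * P₀ (ξ - x t)
    + (Real.exp (-a₀ * t) / ℓ) * ∫ s in (0 : ℝ)..t, Real.exp (a₀ * s) * ωB (ξ + x s - x t)

theorem IsCompact.le_ciSup_of_continuousOn {X α : Type*} [TopologicalSpace X]
    [ConditionallyCompleteLinearOrder α] [TopologicalSpace α] [OrderTopology α]
    {s : Set X} {f : X → α} (hs : IsCompact s) (hf : ContinuousOn f s) {y : X} (hy : y ∈ s) :
    f y ≤ ⨆ z : s, f z :=
  le_ciSup (f := fun z : s => f z) (by simpa only [image_eq_range] using hs.bddAbove_image hf)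
    ⟨y, hy⟩

namespace Function.Periodic

variable {E : Type*} [NormedAddCommGroup E] {c : ℝ}

theorem norm_le_iSup_Icc {g : ℝ → E} (hg : Periodic g c) (hc : 0 < c) (hg_cont : Continuous g)
    (y : ℝ) : ‖g y‖ ≤ ⨆ ζ : Icc 0 c, ‖g ζ‖ := by
  obtain ⟨z, hz, hyz⟩ := hg.exists_mem_Ico₀ hc y
  rw [hyz]
  exact isCompact_Icc.le_ciSup_of_continuousOn hg_cont.norm.continuousOn (Ico_subset_Icc_self hz)

variable [NormedSpace ℝ E]

theorem deriv {f : ℝ → E} (hf : Periodic f c) : Periodic (_root_.deriv f) c := fun x => by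
  rw [← deriv_comp_add_const, funext hf]

theorem norm_sub_le_iSup_norm_deriv_mul {f : ℝ → E} (hf : Periodic f c) (hc : 0 < c)
    (hf_diff : ContDiff ℝ 1 f) (u v : ℝ) :
    ‖f u - f v‖ ≤ (⨆ ζ : Icc 0 c, ‖_root_.deriv f ζ‖) * ‖u - v‖ :=
  convex_univ.norm_image_sub_le_of_norm_deriv_le (fun y _ => hf_diff.differentiable one_ne_zero y)
    (fun y _ => hf.deriv.norm_le_iSup_Icc hc (hf_diff.continuous_deriv le_rfl) y)
    (mem_univ v) (mem_univ u)

end Function.Periodic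

theorem integral_exp_mul {a : ℝ} (ha : a ≠ 0) (t : ℝ) :
    ∫ s in (0 : ℝ)..t, exp (a * s) = (exp (a * t) - 1) / a := by
  rw [intervalIntegral.integral_comp_mul_left exp ha, integral_exp, mul_zero, exp_zero,
    smul_eq_mul, inv_mul_eq_div]

theorem exp_neg_mul_abs_integral_exp_mul_le {a t K : ℝ} {f : ℝ → ℝ} (ha : 0 < a) (ht : 0 ≤ t)
    (hf : ∀ s ∈ Icc 0 t, |f s| ≤ K) :
    exp (-a * t) * |∫ s in (0 : ℝ)..t, exp (a * s) * f s| ≤ K / a := by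
  have hK : 0 ≤ K := (abs_nonneg _).trans (hf 0 ⟨le_rfl, ht⟩)
  have hbound : |∫ s in (0 : ℝ)..t, exp (a * s) * f s| ≤ K * ((exp (a * t) - 1) / a) := by
    rw [← integral_exp_mul ha.ne', ← intervalIntegral.integral_const_mul, ← Real.norm_eq_abs]
    refine intervalIntegral.norm_integral_le_of_norm_le ht (.of_forall fun s hs => ?_)
      ((by fun_prop : Continuous fun s => K * exp (a * s)).intervalIntegrable _ _)
    rw [Real.norm_eq_abs, abs_mul, abs_of_pos (exp_pos _), mul_comm K]
    exact mul_le_mul_of_nonneg_left (hf s (Ioc_subset_Icc_self hs)) (exp_pos _).le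
  have hdiscount : exp (-a * t) * (exp (a * t) - 1) ≤ 1 := by
    rw [mul_sub, ← exp_add, neg_mul, neg_add_cancel, exp_zero, mul_one]
    linarith [exp_pos (-(a * t))]
  calc exp (-a * t) * |∫ s in (0 : ℝ)..t, exp (a * s) * f s|
      ≤ exp (-a * t) * (K * ((exp (a * t) - 1) / a)) :=
        mul_le_mul_of_nonneg_left hbound (exp_pos _).le
    _ = K / a * (exp (-a * t) * (exp (a * t) - 1)) := by ring
    _ ≤ K / a := mul_le_of_le_one_right (div_nonneg hK ha.le) hdiscount

theorem exp_neg_mul_abs_sub_integral_exp_mul_le {a t K : ℝ} {f g : ℝ → ℝ} (ha : 0 < a)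
    (ht : 0 ≤ t) (hf : ContinuousOn f (Icc 0 t)) (hg : ContinuousOn g (Icc 0 t))
    (hfg : ∀ s ∈ Icc 0 t, |f s - g s| ≤ K) :
    exp (-a * t) * |(∫ s in (0 : ℝ)..t, exp (a * s) * f s) - ∫ s in (0 : ℝ)..t, exp (a * s) * g s|
      ≤ K / a := by
  have hint : ∀ h : ℝ → ℝ, ContinuousOn h (Icc 0 t) →
      IntervalIntegrable (fun s => exp (a * s) * h s) MeasureTheory.volume 0 t := fun h hh =>
    ((by fun_prop : Continuous fun s => exp (a * s)).continuousOn.mul hh).intervalIntegrable_of_Icc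
      ht
  rw [← intervalIntegral.integral_sub (hint f hf) (hint g hg)]
  simp_rw [← mul_sub]
  exact exp_neg_mul_abs_integral_exp_mul_le ha ht hfg

theorem abs_Pint_sub_le {ℓ a₀ t ξ A B : ℝ} {ωB P₀ x₁ x₂ : ℝ → ℝ} (hℓ : 0 < ℓ) (ha₀ : 0 < a₀)
    (ht : 0 ≤ t) (hω₁ : ContinuousOn (fun s => ωB (ξ + x₁ s - x₁ t)) (Icc 0 t))
    (hω₂ : ContinuousOn (fun s => ωB (ξ + x₂ s - x₂ t)) (Icc 0 t))
    (hP : |P₀ (ξ - x₁ t) - P₀ (ξ - x₂ t)| ≤ A)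
    (hω : ∀ s ∈ Icc 0 t, |ωB (ξ + x₁ s - x₁ t) - ωB (ξ + x₂ s - x₂ t)| ≤ B) :
    |Pint ℓ a₀ ωB P₀ x₁ ξ t - Pint ℓ a₀ ωB P₀ x₂ ξ t| ≤ A + B / (a₀ * ℓ) := by
  have hexp : exp (-a₀ * t) ≤ 1 := exp_le_one_iff.mpr (by nlinarith)
  calc |Pint ℓ a₀ ωB P₀ x₁ ξ t - Pint ℓ a₀ ωB P₀ x₂ ξ t|
      = |exp (-a₀ * t) * (P₀ (ξ - x₁ t) - P₀ (ξ - x₂ t))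
          + exp (-a₀ * t) * ((∫ s in (0 : ℝ)..t, exp (a₀ * s) * ωB (ξ + x₁ s - x₁ t))
            - ∫ s in (0 : ℝ)..t, exp (a₀ * s) * ωB (ξ + x₂ s - x₂ t)) / ℓ| := by
        unfold Pint; ring_nf
    _ ≤ exp (-a₀ * t) * |P₀ (ξ - x₁ t) - P₀ (ξ - x₂ t)|
          + exp (-a₀ * t) * |(∫ s in (0 : ℝ)..t, exp (a₀ * s) * ωB (ξ + x₁ s - x₁ t))
            - ∫ s in (0 : ℝ)..t, exp (a₀ * s) * ωB (ξ + x₂ s - x₂ t)| / ℓ := by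
        refine (abs_add_le _ _).trans_eq ?_
        rw [abs_div, abs_mul, abs_mul, abs_of_pos (exp_pos _), abs_of_pos hℓ]
    _ ≤ A + B / a₀ / ℓ :=
        add_le_add ((mul_le_of_le_one_left (abs_nonneg _) hexp).trans hP)
          (div_le_div_of_nonneg_right
            (exp_neg_mul_abs_sub_integral_exp_mul_le ha₀ ht hω₁ hω₂ hω) hℓ.le)
    _ = A + B / (a₀ * ℓ) := by rw [div_div]

theorem Pint_lipschitz_in_x_general
    (ℓ a₀ T : ℝ) (hℓ : 0 < ℓ) (ha₀ : 0 < a₀)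
    (ωB P₀ : ℝ → ℝ)
    (hωB : ContDiff ℝ 1 ωB) (hωBper : Function.Periodic ωB ℓ)
    (hP₀ : ContDiff ℝ 1 P₀) (hP₀per : Function.Periodic P₀ ℓ)
    (x₁ x₂ : ℝ → ℝ)
    (hx₁ : ContinuousOn x₁ (Icc 0 T))
    (hx₂ : ContinuousOn x₂ (Icc 0 T)) :
    ∀ ξ ∈ Icc (0 : ℝ) ℓ, ∀ t ∈ Icc (0 : ℝ) T,
      |Pint ℓ a₀ ωB P₀ x₁ ξ t - Pint ℓ a₀ ωB P₀ x₂ ξ t|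
        ≤ ((⨆ ζ : Icc (0 : ℝ) ℓ, |deriv P₀ ζ.1|)
            + (2 / (a₀ * ℓ)) * ⨆ ζ : Icc (0 : ℝ) ℓ, |deriv ωB ζ.1|)
          * ⨆ s : Icc (0 : ℝ) T, |x₁ s.1 - x₂ s.1| := by
  intro ξ _ t ht
  set M₁ := ⨆ ζ : Icc (0 : ℝ) ℓ, |deriv P₀ ζ.1|
  set M₂ := ⨆ ζ : Icc (0 : ℝ) ℓ, |deriv ωB ζ.1|
  set D := ⨆ s : Icc (0 : ℝ) T, |x₁ s.1 - x₂ s.1|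
  have hD : ∀ s ∈ Icc 0 T, |x₁ s - x₂ s| ≤ D := fun s hs =>
    isCompact_Icc.le_ciSup_of_continuousOn (hx₁.sub hx₂).abs hs
  have hsub : Icc 0 t ⊆ Icc 0 T := Icc_subset_Icc_right ht.2
  have hP : |P₀ (ξ - x₁ t) - P₀ (ξ - x₂ t)| ≤ M₁ * D := by
    refine (hP₀per.norm_sub_le_iSup_norm_deriv_mul hℓ hP₀ _ _).trans ?_
    rw [Real.norm_eq_abs, sub_sub_sub_cancel_left, abs_sub_comm]
    exact mul_le_mul_of_nonneg_left (hD t ht) (Real.iSup_nonneg fun _ => abs_nonneg _)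
  have hω : ∀ s ∈ Icc 0 t, |ωB (ξ + x₁ s - x₁ t) - ωB (ξ + x₂ s - x₂ t)| ≤ M₂ * (2 * D) := by
    intro s hs
    refine (hωBper.norm_sub_le_iSup_norm_deriv_mul hℓ hωB _ _).trans ?_
    have hshift : (ξ + x₁ s - x₁ t) - (ξ + x₂ s - x₂ t) = (x₁ s - x₂ s) - (x₁ t - x₂ t) := by ring
    rw [Real.norm_eq_abs, hshift, two_mul]
    exact mul_le_mul_of_nonneg_left
      ((abs_sub _ _).trans (add_le_add (hD s (hsub hs)) (hD t ht)))
      (Real.iSup_nonneg fun _ => abs_nonneg _)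
  have hωx : ∀ x, ContinuousOn x (Icc 0 T) → ContinuousOn (fun s => ωB (ξ + x s - x t)) (Icc 0 t) :=
    fun x hx => hωB.continuous.comp_continuousOn
      ((continuousOn_const.add (hx.mono hsub)).sub continuousOn_const)
  calc |Pint ℓ a₀ ωB P₀ x₁ ξ t - Pint ℓ a₀ ωB P₀ x₂ ξ t| ≤ M₁ * D + M₂ * (2 * D) / (a₀ * ℓ) :=
        abs_Pint_sub_le hℓ ha₀ ht.1 (hωx x₁ hx₁) (hωx x₂ hx₂) hP hω
    _ = (M₁ + (2 / (a₀ * ℓ)) * M₂) * D := by ring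

/-- **Lipschitz estimate**: for two continuous inputs `x₁, x₂` on `[0,T]`
vanishing at `0`,
`sup_{ξ∈[0,ℓ], t∈[0,T]} |P_{x₁}(ξ,t) − P_{x₂}(ξ,t)|
  ≤ (‖P₀'‖_∞ + (2/(a₀ℓ))‖ω_B'‖_∞) · sup_{t∈[0,T]} |x₁(t) − x₂(t)|`. -/
theorem Pint_lipschitz_in_x
    (ℓ a₀ T : ℝ) (hℓ : 0 < ℓ) (ha₀ : 0 < a₀) (hT : 0 ≤ T)
    (ωB P₀ : ℝ → ℝ)
    (hωB : ContDiff ℝ 1 ωB) (hωBper : Function.Periodic ωB ℓ)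
    (hP₀ : ContDiff ℝ 1 P₀) (hP₀per : Function.Periodic P₀ ℓ)
    (x₁ x₂ : ℝ → ℝ)
    (hx₁ : ContinuousOn x₁ (Icc 0 T)) (hx₁0 : x₁ 0 = 0)
    (hx₂ : ContinuousOn x₂ (Icc 0 T)) (hx₂0 : x₂ 0 = 0) :
    ∀ ξ ∈ Icc (0 : ℝ) ℓ, ∀ t ∈ Icc (0 : ℝ) T,
      |Pint ℓ a₀ ωB P₀ x₁ ξ t - Pint ℓ a₀ ωB P₀ x₂ ξ t|
        ≤ ((⨆ ζ : Icc (0 : ℝ) ℓ, |deriv P₀ ζ.1|)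
            + (2 / (a₀ * ℓ)) * ⨆ ζ : Icc (0 : ℝ) ℓ, |deriv ωB ζ.1|)
          * ⨆ s : Icc (0 : ℝ) T, |x₁ s.1 - x₂ s.1| :=
  Pint_lipschitz_in_x_general ℓ a₀ T hℓ ha₀ ωB P₀ hωB hωBper hP₀ hP₀per x₁ x₂ hx₁ hx₂
end

section
/- Linear stability criterion: with F and e as defined, and τ = −(1/4)(2a₀ + ζℓ/π + 2λa₁/(a₀ℓ)), every eigenvalue of the Jacobian DF(e) has strictly negative real part if and only if τ < 0; and if τ > 0 then DF(e) has an eigenvalue with strictly positive real part. -/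
open Real Set Polynomial

/-- The first-order vector field of the two-row model in the variables
`(p₁ᶜ, p₁ˢ, q₁ᶜ, q₁ˢ, x)`, with `ζ = 2πk/(ηℓ)` and `λ = 2π²U/(ηℓ)`. -/
noncomputable def motorField (l zeta lam a0 a1 b1 : ℝ) (p : Fin 5 → ℝ) : Fin 5 → ℝ :=
  ![-a0 * p 0 + (zeta * p 4 + (lam / 2) * (p 1 - p 3)) * p 1 + a1 / l,
    -a0 * p 1 - (zeta * p 4 + (lam / 2) * (p 1 - p 3)) * p 0 + b1 / l,
    -a0 * p 2 - (zeta * p 4 + (lam / 2) * (p 1 - p 3)) * p 3 + a1 / l,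
    -a0 * p 3 + (zeta * p 4 + (lam / 2) * (p 1 - p 3)) * p 2 + b1 / l,
    -(l / (2 * π)) * (zeta * p 4 + (lam / 2) * (p 1 - p 3))]

/-- The equilibrium point `e = (a₁/(a₀ℓ), b₁/(a₀ℓ), a₁/(a₀ℓ), b₁/(a₀ℓ), 0)`. -/
noncomputable def motorEq (l a0 a1 b1 : ℝ) : Fin 5 → ℝ :=
  ![a1 / (a0 * l), b1 / (a0 * l), a1 / (a0 * l), b1 / (a0 * l), 0]

/-- The Jacobian matrix of the vector field at the equilibrium point. -/
noncomputable def motorJac (l zeta lam a0 a1 b1 : ℝ) : Matrix (Fin 5) (Fin 5) ℝ :=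
  Matrix.of fun i j =>
    fderiv ℝ (motorField l zeta lam a0 a1 b1) (motorEq l a0 a1 b1) (Pi.single j 1) i

/-! At the equilibrium the coupling `ζx + (λ/2)(p₁ˢ − q₁ˢ)` vanishes, and the characteristic
polynomial of the Jacobian factors as `(X + a₀)³ (X² + t X + a₀ζℓ/(2π))` with `t = −2τ`. The root
`−a₀` is stable; a root of a real quadratic with positive constant term either is real, and then
has the sign of `−t`, or has real part `−t/2`. Conversely the real parts of the two roots of the
quadratic add up to `−t`, so one of them is positive when `t < 0`. -/

theorem fderiv_apply_self {𝕜 ι : Type*} [NontriviallyNormedField 𝕜] [Fintype ι] (i : ι)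
    (x : ι → 𝕜) : fderiv 𝕜 (fun p : ι → 𝕜 => p i) x = ContinuousLinearMap.proj i :=
  (hasFDerivAt_apply i x).fderiv

theorem re_neg_of_quadratic_eq_zero {b c : ℝ} (hb : 0 < b) (hc : 0 < c) {z : ℂ}
    (hz : z ^ 2 + b * z + c = 0) : z.re < 0 := by
  have hre : z.re ^ 2 - z.im ^ 2 + b * z.re + c = 0 := by
    simpa [sq] using congrArg Complex.re hz
  have him : z.im * (2 * z.re + b) = 0 := by
    have := congrArg Complex.im hz
    simp only [sq, Complex.add_im, Complex.mul_im, Complex.ofReal_re, Complex.ofReal_im,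
      zero_mul, add_zero, Complex.zero_im] at this
    linear_combination this
  rcases mul_eq_zero.mp him with hreal | hre_eq
  · rw [hreal] at hre
    nlinarith
  · linarith

theorem exists_quadratic_eq_mul (b c : ℝ) :
    ∃ r s : ℂ, (∀ z : ℂ, z ^ 2 + b * z + c = (z - r) * (z - s)) ∧ r.re + s.re = -b := by
  obtain ⟨d, hd⟩ := IsAlgClosed.exists_eq_mul_self ((b : ℂ) ^ 2 - 4 * c)
  refine ⟨(-b + d) / 2, (-b - d) / 2, fun z => by linear_combination -hd / 4, ?_⟩
  rw [← Complex.add_re, show (-b + d) / 2 + (-b - d) / 2 = (-b : ℂ) by ring]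
  simp

theorem isRoot_map_cube_mul_quadratic_iff (a b c : ℝ) (z : ℂ) :
    (((X + C a) ^ 3 * (X ^ 2 + C b * X + C c)).map (algebraMap ℝ ℂ)).IsRoot z ↔
      z = -a ∨ z ^ 2 + b * z + c = 0 := by
  simp [eq_neg_iff_add_eq_zero]

section CubeMulQuadratic

variable {a b c : ℝ}

theorem forall_isRoot_re_neg_iff (ha : 0 < a) (hc : 0 < c) :
    (∀ z : ℂ, (((X + C a) ^ 3 * (X ^ 2 + C b * X + C c)).map (algebraMap ℝ ℂ)).IsRoot z →
      z.re < 0) ↔ 0 < b := by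
  simp only [isRoot_map_cube_mul_quadratic_iff]
  constructor
  · intro h
    obtain ⟨r, s, hfac, hsum⟩ := exists_quadratic_eq_mul b c
    have hr := h r (.inr (by simp [hfac]))
    have hs := h s (.inr (by simp [hfac]))
    linarith
  · rintro hb z (rfl | hz)
    · simpa using ha
    · exact re_neg_of_quadratic_eq_zero hb hc hz

theorem exists_isRoot_re_pos (hb : b < 0) :
    ∃ z : ℂ, (((X + C a) ^ 3 * (X ^ 2 + C b * X + C c)).map (algebraMap ℝ ℂ)).IsRoot z ∧
      0 < z.re := by
  simp only [isRoot_map_cube_mul_quadratic_iff]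
  obtain ⟨r, s, hfac, hsum⟩ := exists_quadratic_eq_mul b c
  rcases lt_or_ge 0 r.re with hr | hr
  · exact ⟨r, .inr (by simp [hfac]), hr⟩
  · exact ⟨s, .inr (by simp [hfac]), by linarith⟩

end CubeMulQuadratic

def motorJacMatrix {R : Type*} [CommRing R] (a c A B z m : R) : Matrix (Fin 5) (Fin 5) R :=
  !![-a, c * B, 0, -(c * B), z * B;
     0, -a - c * A, 0, c * A, -(z * A);
     0, -(c * B), -a, c * B, -(z * B);
     0, c * A, 0, -a - c * A, z * A;
     0, -(m * c), 0, m * c, -(m * z)]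

-- Columns 0 and 2 carry only their diagonal entry; the remaining 3 × 3 block contributes one
-- more factor `X + a`.
theorem charpoly_motorJacMatrix {R : Type*} [CommRing R] (a c A B z m : R) :
    (motorJacMatrix a c A B z m).charpoly =
      (X + C a) ^ 3 * (X ^ 2 + C (a + 2 * c * A + m * z) * X + C (a * m * z)) := by
  rw [Matrix.charpoly, Matrix.det_succ_column_zero]
  simp +decide [motorJacMatrix, Fin.sum_univ_succ, Matrix.det_succ_column_zero,
    Matrix.charmatrix_apply, Matrix.diagonal_apply, Fin.succAbove, map_ofNat]
  ring

theorem differentiable_motorField_apply (l zeta lam a0 a1 b1 : ℝ) (i : Fin 5) :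
    Differentiable ℝ (fun p => motorField l zeta lam a0 a1 b1 p i) := by
  fin_cases i <;> simp only [motorField] <;> simp <;> fun_prop

theorem motorJac_eq (l zeta lam a0 a1 b1 : ℝ) :
    motorJac l zeta lam a0 a1 b1 =
      motorJacMatrix a0 (lam / 2) (a1 / (a0 * l)) (b1 / (a0 * l)) zeta (l / (2 * π)) := by
  ext i j
  rw [motorJac, Matrix.of_apply,
    fderiv_pi fun i => (differentiable_motorField_apply l zeta lam a0 a1 b1 i).differentiableAt,
    ContinuousLinearMap.pi_apply]
  fin_cases i <;>
    simp (disch := fun_prop) only [motorField, Fin.reduceFinMk, Matrix.cons_val,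
      fderiv_fun_add, fderiv_fun_sub, fderiv_fun_mul, fderiv_fun_neg, fderiv_fun_const,
      fderiv_apply_self] <;>
    fin_cases j <;> simp [motorEq, motorJacMatrix] <;> ring

theorem motorField_linear_stability_general
    (l zeta lam a0 a1 b1 : ℝ)
    (hl : 0 < l) (hzeta : 0 < zeta) (ha0 : 0 < a0)
    (τ : ℝ) (hτ : τ = -(1 / 4) * (2 * a0 + zeta * l / π + 2 * lam * a1 / (a0 * l))) :
    ((∀ z : ℂ,
        ((motorJac l zeta lam a0 a1 b1).charpoly.map (algebraMap ℝ ℂ)).IsRoot z →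
        z.re < 0) ↔ τ < 0) ∧
    (0 < τ → ∃ z : ℂ,
      ((motorJac l zeta lam a0 a1 b1).charpoly.map (algebraMap ℝ ℂ)).IsRoot z ∧
      0 < z.re) := by
  rw [motorJac_eq, charpoly_motorJacMatrix]
  have hτ_trace : τ = -(a0 + 2 * (lam / 2) * (a1 / (a0 * l)) + l / (2 * π) * zeta) / 2 := by
    rw [hτ]
    ring
  have hc : 0 < a0 * (l / (2 * π)) * zeta := by positivity
  refine ⟨(forall_isRoot_re_neg_iff ha0 hc).trans ⟨fun h => ?_, fun h => ?_⟩,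
    fun h => exists_isRoot_re_pos ?_⟩ <;> linarith

/-- **Linear stability criterion**: all complex eigenvalues of the Jacobian at the
equilibrium (the roots of its characteristic polynomial over `ℂ`) have strictly
negative real part if and only if `τ < 0`; and if `τ > 0` there is an eigenvalue
with strictly positive real part. -/
theorem motorField_linear_stability
    (l zeta lam a0 a1 b1 : ℝ)
    (hl : 0 < l) (hzeta : 0 < zeta) (hlam : 0 < lam) (ha0 : 0 < a0)
    (τ : ℝ) (hτ : τ = -(1 / 4) * (2 * a0 + zeta * l / π + 2 * lam * a1 / (a0 * l))) :
    ((∀ z : ℂ,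
        ((motorJac l zeta lam a0 a1 b1).charpoly.map (algebraMap ℝ ℂ)).IsRoot z →
        z.re < 0) ↔ τ < 0) ∧
    (0 < τ → ∃ z : ℂ,
      ((motorJac l zeta lam a0 a1 b1).charpoly.map (algebraMap ℝ ℂ)).IsRoot z ∧
      0 < z.re) :=
  motorField_linear_stability_general l zeta lam a0 a1 b1 hl hzeta ha0 τ hτ
end
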